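/- arXiv:1902.07604 — 2 statements merged into one kernel-verified Lean document; each statement's English description precedes it below -/
import Mathlib

section
/- Let β > 0, let a be a nondecreasing weight on (0,∞) and let g, h be nonnegative measurable functions on (0,∞). Then ess sup_{x∈(0,∞)} [ (∫_0^∞ 𝒜(x,t)^β g(t) dt)^{1/β} · (ess sup_{t∈(0,∞)} 𝒜(t,x)·h(t)) ] ≈ ess sup_{x∈(0,∞)} [ h(x) (∫_0^x g(t) dt)^{1/β} ] + ess sup_{x∈(0,∞)} [ a(x) h(x) (∫_x^∞ a(t)^{−β} g(t) dt)^{1/β} ], with equivalence constants depending only on β. -/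
/-
Write `I(x) = ∫_0^∞ 𝒜(x,t)^β g(t) dt` and `E(x) = ess sup_t 𝒜(t,x) h(t)`, so that the left-hand
side is `A = ess sup_x I(x)^{1/β} E(x)`.

Upper bound. The kernel is submultiplicative along chains, `𝒜(t,x) 𝒜(x,s) ≤ 𝒜(t,s)`, hence
`𝒜(t,x)^β I(x) ≤ I(t)`; splitting `I(t)` at `s = t` and using `𝒜 ≤ 1`, `𝒜(t,s) ≤ a(t)/a(s)` gives
`I(t) ≤ ∫_0^t g + a(t)^β ∫_t^∞ a^{-β} g`, which bounds `I(x)^{1/β} 𝒜(t,x) h(t)` for a.e. `t`.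

Lower bound. Since `a` is nondecreasing, `𝒜(x,t) ≥ 1/2` for `t < x` and `𝒜(x,t) ≥ a(x)/(2a(t))` for
`t > x`, so both pieces of the right-hand side at the point `x` are bounded by `2 I(x)^{1/β}`;
symmetrically `ess sup_{t>x} h ≤ 2E(x)` and `ess sup_{t<x} a h ≤ 2a(x)E(x)`. This controls
`(∫_0^x g)^{1/β} ess sup_{t>x} h` by `4A` for a.e. `x`; for a.e. `t` the value `h(t)` is below
every `ess sup_{s>x} h` with `x < t`, and the left continuity of `x ↦ ∫_0^x g` lets `x` increase to
`t`. The second piece is handled in the same way, approaching `t` from the right.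
-/

open MeasureTheory ENNReal Set

lemma div_add_le_one (u w : ℝ≥0∞) : u / (u + w) ≤ 1 :=
  ENNReal.div_le_of_le_mul (by simp)

lemma rpow_div_add_le_one {p : ℝ} (hp : 0 ≤ p) (u w : ℝ≥0∞) : (u / (u + w)) ^ p ≤ 1 :=
  rpow_le_one (div_add_le_one u w) hp

lemma one_le_two_mul_div_add {u w : ℝ≥0∞} (hu0 : u ≠ 0) (hu : u ≠ ∞) (hw : w ≤ u) :
    1 ≤ 2 * (u / (u + w)) := by
  have huw : u + w ≠ ∞ := by finiteness [hw.trans_lt hu.lt_top]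
  rw [← mul_div_assoc, ENNReal.le_div_iff_mul_le (.inr (by simp [hu0])) (.inl huw), one_mul,
    two_mul]
  exact add_le_add_right hw u

lemma div_le_two_mul_div_add {u w : ℝ≥0∞} (hu : u ≤ w) : u / w ≤ 2 * (u / (u + w)) := by
  rw [← mul_div_assoc, ← ENNReal.mul_div_mul_left u w two_ne_zero ofNat_ne_top, two_mul w]
  exact ENNReal.div_le_div_left (add_le_add_left hu w) _

-- No side conditions: the degenerate cases are absorbed by `∞ / ∞ = 0` and `0 / 0 = 0`.
lemma div_add_mul_div_add_le (u v w : ℝ≥0∞) : u / (u + v) * (v / (v + w)) ≤ u / (u + w) := by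
  rcases eq_top_or_lt_top u with rfl | hu
  · simp
  rcases eq_top_or_lt_top v with rfl | hv
  · simp
  rcases eq_top_or_lt_top w with rfl | hw
  · simp
  rcases eq_or_ne u 0 with rfl | hu0
  · simp
  rcases eq_or_ne v 0 with rfl | hv0
  · simp
  lift u to NNReal using hu.ne
  lift v to NNReal using hv.ne
  lift w to NNReal using hw.ne
  simp only [ne_eq, ENNReal.coe_eq_zero] at hu0 hv0
  rw [← ENNReal.coe_add, ← ENNReal.coe_add, ← ENNReal.coe_add,
    ← ENNReal.coe_div (by positivity), ← ENNReal.coe_div (by positivity),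
    ← ENNReal.coe_div (by positivity), ← ENNReal.coe_mul, ENNReal.coe_le_coe,
    ← NNReal.coe_le_coe]
  push_cast
  rw [div_mul_div_comm, div_le_div_iff₀ (by positivity) (by positivity)]
  have hu' := u.coe_nonneg
  have hv' := v.coe_nonneg
  have hw' := w.coe_nonneg
  nlinarith [mul_nonneg hu' (add_nonneg (mul_nonneg hu' hw') (mul_nonneg hv' hv'))]

lemma add_rpow_le_two_rpow_mul_add {p : ℝ} (hp : 0 ≤ p) (u v : ℝ≥0∞) :
    (u + v) ^ p ≤ 2 ^ p * (u ^ p + v ^ p) := by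
  calc (u + v) ^ p ≤ (2 * max u v) ^ p := by
        gcongr; rw [two_mul]; exact add_le_add (le_max_left _ _) (le_max_right _ _)
    _ = 2 ^ p * max (u ^ p) (v ^ p) := by
        rw [ENNReal.mul_rpow_of_nonneg _ _ hp, (ENNReal.monotone_rpow_of_nonneg hp).map_max]
    _ ≤ 2 ^ p * (u ^ p + v ^ p) := by gcongr; exact max_le le_self_add le_add_self

lemma ENNReal.rpow_rpow_one_div {p : ℝ} (hp : p ≠ 0) (u : ℝ≥0∞) : (u ^ p) ^ (1 / p) = u := by
  rw [one_div, ENNReal.rpow_rpow_inv hp]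

lemma ENNReal.iSup_rpow {ι : Sort*} {p : ℝ} (hp : 0 < p) (F : ι → ℝ≥0∞) :
    (⨆ i, F i) ^ p = ⨆ i, F i ^ p :=
  (orderIsoRpow p hp).map_iSup F

lemma measure_Ioo_eq_iSup (ν : Measure ℝ) (l t : ℝ) : ν (Ioo l t) = ⨆ x : Iio t, ν (Ioo l x) := by
  have hU : Ioo l t = ⋃ x : Iio t, Ioo l (x : ℝ) := by
    ext s
    simp only [mem_Ioo, mem_iUnion, Subtype.exists, mem_Iio, exists_prop]
    exact ⟨fun ⟨hl, hs⟩ => (exists_between hs).imp fun x hx => ⟨hx.2, hl, hx.1⟩,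
      fun ⟨x, hx, hl, hs⟩ => ⟨hl, hs.trans hx⟩⟩
  conv_lhs => rw [hU]
  exact Monotone.measure_iUnion fun x y hxy => Ioo_subset_Ioo_right hxy

lemma measure_Ioi_eq_iSup (ν : Measure ℝ) (t : ℝ) : ν (Ioi t) = ⨆ x : Ioi t, ν (Ioi x) := by
  have hU : Ioi t = ⋃ x : Ioi t, Ioi (x : ℝ) := by
    ext s
    simp only [mem_Ioi, mem_iUnion, Subtype.exists, exists_prop]
    exact ⟨fun hs => (exists_between hs).imp fun x hx => hx, fun ⟨x, hx, hs⟩ => hx.trans hs⟩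
  conv_lhs => rw [hU]
  exact Antitone.measure_iUnion fun x y hxy => Ioi_subset_Ioi hxy

lemma exists_mem_Ioo_of_ae_restrict {U : Set ℝ} {P : ℝ → Prop} (h : ∀ᵐ x ∂volume.restrict U, P x)
    {l r : ℝ} (hlr : l < r) (hsub : Ioo l r ⊆ U) : ∃ x ∈ Ioo l r, P x := by
  have : (ae (volume.restrict (Ioo l r))).NeBot := ae_restrict_neBot.2 (by simp [hlr])
  exact ((ae_restrict_mem measurableSet_Ioo).and
    (ae_restrict_of_ae_restrict_of_subset hsub h)).exists

lemma ae_forall_le_essSup_restrict_Ioi (μ : Measure ℝ) (f : ℝ → ℝ≥0∞) :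
    ∀ᵐ t ∂μ, ∀ x < t, f t ≤ essSup f (μ.restrict (Ioi x)) := by
  have hq : ∀ᵐ t ∂μ, ∀ q : ℚ, (q : ℝ) < t → f t ≤ essSup f (μ.restrict (Ioi (q : ℝ))) :=
    ae_all_iff.2 fun q => (ae_restrict_iff' measurableSet_Ioi).1 (ENNReal.ae_le_essSup f)
  filter_upwards [hq] with t ht x hxt
  obtain ⟨q, hxq, hqt⟩ := exists_rat_btwn hxt
  exact (ht q hqt).trans
    (essSup_mono_measure' (Measure.restrict_mono (Ioi_subset_Ioi hxq.le) le_rfl))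

lemma ae_forall_le_essSup_restrict_Iio (μ : Measure ℝ) (f : ℝ → ℝ≥0∞) :
    ∀ᵐ t ∂μ, ∀ x, t < x → f t ≤ essSup f (μ.restrict (Iio x)) := by
  have hq : ∀ᵐ t ∂μ, ∀ q : ℚ, t < (q : ℝ) → f t ≤ essSup f (μ.restrict (Iio (q : ℝ))) :=
    ae_all_iff.2 fun q => (ae_restrict_iff' measurableSet_Iio).1 (ENNReal.ae_le_essSup f)
  filter_upwards [hq] with t ht x htx
  obtain ⟨q, htq, hqx⟩ := exists_rat_btwn htx
  exact (ht q htq).trans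
    (essSup_mono_measure' (Measure.restrict_mono (Iio_subset_Iio hqx.le) le_rfl))

lemma essSup_mul_measure_Ioo_rpow_le {l p : ℝ} (hp : 0 < p) {f : ℝ → ℝ≥0∞} {ν : Measure ℝ}
    {c : ℝ≥0∞} (h : ∀ᵐ x ∂volume.restrict (Ioi l),
      essSup f ((volume.restrict (Ioi l)).restrict (Ioi x)) * ν (Ioo l x) ^ p ≤ c) :
    essSup (fun t => f t * ν (Ioo l t) ^ p) (volume.restrict (Ioi l)) ≤ c := by
  refine essSup_le_of_ae_le _ ?_
  filter_upwards [ae_restrict_mem measurableSet_Ioi, ae_forall_le_essSup_restrict_Ioi _ f]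
    with t (ht : l < t) hft
  rw [measure_Ioo_eq_iSup, ENNReal.iSup_rpow hp, ENNReal.mul_iSup]
  refine iSup_le fun ⟨i, (hi : i < t)⟩ => ?_
  obtain ⟨x, ⟨hix, hxt⟩, hx⟩ := exists_mem_Ioo_of_ae_restrict h (max_lt hi ht)
    (fun s hs => (le_max_right i l).trans_lt hs.1)
  calc f t * ν (Ioo l i) ^ p
      ≤ essSup f ((volume.restrict (Ioi l)).restrict (Ioi x)) * ν (Ioo l x) ^ p := by
        gcongr
        · exact hft x hxt
        · exact (le_max_left i l).trans hix.le
    _ ≤ c := hx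

lemma essSup_mul_measure_Ioi_rpow_le {l p : ℝ} (hp : 0 < p) {f : ℝ → ℝ≥0∞} {ν : Measure ℝ}
    {c : ℝ≥0∞} (h : ∀ᵐ x ∂volume.restrict (Ioi l),
      essSup f ((volume.restrict (Ioi l)).restrict (Iio x)) * ν (Ioi x) ^ p ≤ c) :
    essSup (fun t => f t * ν (Ioi t) ^ p) (volume.restrict (Ioi l)) ≤ c := by
  refine essSup_le_of_ae_le _ ?_
  filter_upwards [ae_restrict_mem measurableSet_Ioi, ae_forall_le_essSup_restrict_Iio _ f]
    with t (ht : l < t) hft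
  rw [measure_Ioi_eq_iSup, ENNReal.iSup_rpow hp, ENNReal.mul_iSup]
  refine iSup_le fun ⟨i, (hi : t < i)⟩ => ?_
  obtain ⟨x, ⟨htx, hxi⟩, hx⟩ := exists_mem_Ioo_of_ae_restrict h hi
    (fun s hs => ht.trans hs.1)
  calc f t * ν (Ioi i) ^ p
      ≤ essSup f ((volume.restrict (Ioi l)).restrict (Iio x)) * ν (Ioi x) ^ p := by
        gcongr
        exact hft x htx
    _ ≤ c := hx

local notation "μ₀" => volume.restrict (Ioi (0 : ℝ))

-- `a x / (a x + a t)` is the kernel `𝒜(x,t)`.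
noncomputable def kernelIntegral (a g : ℝ → ℝ≥0∞) (β x : ℝ) : ℝ≥0∞ :=
  ∫⁻ t in Ioi (0 : ℝ), (a x / (a x + a t)) ^ β * g t

noncomputable def kernelEssSup (a h : ℝ → ℝ≥0∞) (x : ℝ) : ℝ≥0∞ :=
  essSup (fun t => a t / (a t + a x) * h t) μ₀

section Kernel

variable {a g h : ℝ → ℝ≥0∞} {β x t : ℝ}

lemma rpow_div_add_mul_kernelIntegral_le (hβ : 0 ≤ β) (x t : ℝ) :
    (a t / (a t + a x)) ^ β * kernelIntegral a g β x ≤ kernelIntegral a g β t := by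
  rw [kernelIntegral,
    ← lintegral_const_mul' _ _ ((rpow_div_add_le_one hβ _ _).trans_lt one_lt_top).ne]
  refine lintegral_mono fun s => ?_
  rw [← mul_assoc, ← ENNReal.mul_rpow_of_nonneg _ _ hβ]
  gcongr
  exact div_add_mul_div_add_le _ _ _

lemma kernelIntegral_le (hβ : 0 ≤ β) (ht : 0 < t) (hat : a t ≠ ∞) :
    kernelIntegral a g β t
      ≤ (∫⁻ s in Ioo 0 t, g s) + a t ^ β * ∫⁻ s in Ioi t, a s ^ (-β) * g s := by
  have hdisj : Disjoint (Ioo 0 t) (Ici t) := disjoint_left.2 fun _ hs hs' => not_le.2 hs.2 hs'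
  rw [kernelIntegral, ← Ioo_union_Ici_eq_Ioi ht, lintegral_union measurableSet_Ici hdisj,
    ← setLIntegral_congr Ioi_ae_eq_Ici,
    ← lintegral_const_mul' _ _ (rpow_ne_top_of_nonneg hβ hat)]
  refine add_le_add (lintegral_mono fun s => ?_) (lintegral_mono fun s => ?_)
  · exact mul_le_of_le_one_left' (rpow_div_add_le_one hβ _ _)
  · calc (a t / (a t + a s)) ^ β * g s ≤ (a t / a s) ^ β * g s := by
          gcongr; exact le_add_self
      _ = a t ^ β * (a s ^ (-β) * g s) := by
          rw [ENNReal.div_rpow_of_nonneg _ _ hβ, ENNReal.rpow_neg, div_eq_mul_inv, mul_assoc]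

lemma kernelIntegral_rpow_mul_le (hβ : 0 < β) (ht : 0 < t) (hat : a t ≠ ∞) (x : ℝ) :
    kernelIntegral a g β x ^ (1 / β) * (a t / (a t + a x) * h t)
      ≤ 2 ^ (1 / β) * (h t * (∫⁻ s in Ioo 0 t, g s) ^ (1 / β)
        + a t * h t * (∫⁻ s in Ioi t, a s ^ (-β) * g s) ^ (1 / β)) := by
  have hp : 0 ≤ 1 / β := by positivity
  calc kernelIntegral a g β x ^ (1 / β) * (a t / (a t + a x) * h t)
      = ((a t / (a t + a x)) ^ β * kernelIntegral a g β x) ^ (1 / β) * h t := by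
        rw [ENNReal.mul_rpow_of_nonneg _ _ hp, ENNReal.rpow_rpow_one_div hβ.ne']; ring
    _ ≤ kernelIntegral a g β t ^ (1 / β) * h t := by
        gcongr; exact rpow_div_add_mul_kernelIntegral_le hβ.le x t
    _ ≤ ((∫⁻ s in Ioo 0 t, g s) + a t ^ β * ∫⁻ s in Ioi t, a s ^ (-β) * g s) ^ (1 / β) * h t := by
        gcongr; exact kernelIntegral_le hβ.le ht hat
    _ ≤ 2 ^ (1 / β) * ((∫⁻ s in Ioo 0 t, g s) ^ (1 / β)
          + (a t ^ β * ∫⁻ s in Ioi t, a s ^ (-β) * g s) ^ (1 / β)) * h t := by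
        gcongr; exact add_rpow_le_two_rpow_mul_add hp _ _
    _ = _ := by rw [ENNReal.mul_rpow_of_nonneg _ _ hp, ENNReal.rpow_rpow_one_div hβ.ne']; ring

lemma essSup_kernelIntegral_rpow_mul_le (hβ : 0 < β) (ha : ∀ᵐ t ∂μ₀, a t ≠ ∞) :
    essSup (fun x => kernelIntegral a g β x ^ (1 / β) * kernelEssSup a h x) μ₀
      ≤ 2 ^ (1 / β) * (essSup (fun t => h t * (∫⁻ s in Ioo 0 t, g s) ^ (1 / β)) μ₀
        + essSup (fun t => a t * h t * (∫⁻ s in Ioi t, a s ^ (-β) * g s) ^ (1 / β)) μ₀) := by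
  refine essSup_le_of_ae_le _ (ae_of_all _ fun x => ?_)
  simp only [kernelEssSup, ← ENNReal.essSup_const_mul]
  refine essSup_le_of_ae_le _ ?_
  filter_upwards [ae_restrict_mem measurableSet_Ioi, ha, ENNReal.ae_le_essSup _,
    ENNReal.ae_le_essSup _] with t ht hat hB₁ hB₂
  exact (kernelIntegral_rpow_mul_le hβ ht hat x).trans (by gcongr)

lemma lintegral_Ioo_rpow_le_kernelIntegral (hβ : 0 < β) (ha : MonotoneOn a (Ioi 0)) (hx : 0 < x)
    (hax₀ : a x ≠ 0) (hax : a x ≠ ∞) :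
    (∫⁻ t in Ioo 0 x, g t) ^ (1 / β) ≤ 2 * kernelIntegral a g β x ^ (1 / β) := by
  have hI : ∫⁻ t in Ioo 0 x, g t ≤ 2 ^ β * kernelIntegral a g β x := by
    rw [kernelIntegral, ← lintegral_const_mul' _ _ (by finiteness)]
    refine (setLIntegral_mono' measurableSet_Ioo fun t ht => ?_).trans
      (lintegral_mono_set Ioo_subset_Ioi_self)
    calc g t = 1 ^ β * g t := by rw [one_rpow, one_mul]
      _ ≤ (2 * (a x / (a x + a t))) ^ β * g t := by
          gcongr
          exact one_le_two_mul_div_add hax₀ hax (ha ht.1 hx ht.2.le)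
      _ = 2 ^ β * ((a x / (a x + a t)) ^ β * g t) := by
          rw [ENNReal.mul_rpow_of_nonneg _ _ hβ.le, mul_assoc]
  calc (∫⁻ t in Ioo 0 x, g t) ^ (1 / β) ≤ (2 ^ β * kernelIntegral a g β x) ^ (1 / β) := by gcongr
    _ = 2 * kernelIntegral a g β x ^ (1 / β) := by
        rw [ENNReal.mul_rpow_of_nonneg _ _ (by positivity), ENNReal.rpow_rpow_one_div hβ.ne']

lemma mul_lintegral_Ioi_rpow_le_kernelIntegral (hβ : 0 < β) (ha : MonotoneOn a (Ioi 0))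
    (hx : 0 < x) (hax : a x ≠ ∞) :
    a x * (∫⁻ t in Ioi x, a t ^ (-β) * g t) ^ (1 / β) ≤ 2 * kernelIntegral a g β x ^ (1 / β) := by
  have hI : a x ^ β * ∫⁻ t in Ioi x, a t ^ (-β) * g t ≤ 2 ^ β * kernelIntegral a g β x := by
    rw [kernelIntegral, ← lintegral_const_mul' _ _ (rpow_ne_top_of_nonneg hβ.le hax),
      ← lintegral_const_mul' _ _ (by finiteness)]
    refine (setLIntegral_mono' measurableSet_Ioi fun t (ht : x < t) => ?_).trans
      (lintegral_mono_set (Ioi_subset_Ioi hx.le))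
    calc a x ^ β * (a t ^ (-β) * g t) = (a x / a t) ^ β * g t := by
          rw [ENNReal.div_rpow_of_nonneg _ _ hβ.le, ENNReal.rpow_neg, div_eq_mul_inv, mul_assoc]
      _ ≤ (2 * (a x / (a x + a t))) ^ β * g t := by
          gcongr
          exact div_le_two_mul_div_add (ha hx (hx.trans ht) ht.le)
      _ = 2 ^ β * ((a x / (a x + a t)) ^ β * g t) := by
          rw [ENNReal.mul_rpow_of_nonneg _ _ hβ.le, mul_assoc]
  calc a x * (∫⁻ t in Ioi x, a t ^ (-β) * g t) ^ (1 / β)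
      = (a x ^ β * ∫⁻ t in Ioi x, a t ^ (-β) * g t) ^ (1 / β) := by
        rw [ENNReal.mul_rpow_of_nonneg _ _ (by positivity), ENNReal.rpow_rpow_one_div hβ.ne']
    _ ≤ (2 ^ β * kernelIntegral a g β x) ^ (1 / β) := by gcongr
    _ = 2 * kernelIntegral a g β x ^ (1 / β) := by
        rw [ENNReal.mul_rpow_of_nonneg _ _ (by positivity), ENNReal.rpow_rpow_one_div hβ.ne']

lemma essSup_restrict_Ioi_le_kernelEssSup (ha : MonotoneOn a (Ioi 0))
    (hae : ∀ᵐ t ∂μ₀, 0 < a t ∧ a t < ∞) (hx : 0 < x) :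
    essSup h ((μ₀).restrict (Ioi x)) ≤ 2 * kernelEssSup a h x := by
  calc essSup h ((μ₀).restrict (Ioi x))
      ≤ essSup (fun t => 2 * (a t / (a t + a x) * h t)) ((μ₀).restrict (Ioi x)) := by
        refine essSup_mono_ae ?_
        filter_upwards [ae_restrict_mem measurableSet_Ioi, ae_restrict_of_ae hae]
          with t (ht : x < t) hat
        calc h t = 1 * h t := (one_mul _).symm
          _ ≤ 2 * (a t / (a t + a x)) * h t := by
              gcongr
              exact one_le_two_mul_div_add hat.1.ne' hat.2.ne (ha hx (hx.trans ht) ht.le)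
          _ = 2 * (a t / (a t + a x) * h t) := mul_assoc _ _ _
    _ = 2 * essSup (fun t => a t / (a t + a x) * h t) ((μ₀).restrict (Ioi x)) :=
        ENNReal.essSup_const_mul
    _ ≤ 2 * kernelEssSup a h x := by
        gcongr
        exact essSup_mono_measure' Measure.restrict_le_self

lemma essSup_restrict_Iio_le_kernelEssSup (ha : MonotoneOn a (Ioi 0)) (hax₀ : a x ≠ 0)
    (hax : a x ≠ ∞) :
    essSup (fun t => a t * h t) ((μ₀).restrict (Iio x)) ≤ 2 * (a x * kernelEssSup a h x) := by
  calc essSup (fun t => a t * h t) ((μ₀).restrict (Iio x))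
      ≤ essSup (fun t => 2 * a x * (a t / (a t + a x) * h t)) ((μ₀).restrict (Iio x)) := by
        refine essSup_mono_ae ?_
        filter_upwards [ae_restrict_mem measurableSet_Iio,
          ae_restrict_of_ae (ae_restrict_mem measurableSet_Ioi)] with t (ht : t < x) (ht₀ : 0 < t)
        calc a t * h t = a x * (a t / a x) * h t := by rw [ENNReal.mul_div_cancel hax₀ hax]
          _ ≤ a x * (2 * (a t / (a t + a x))) * h t := by
              gcongr
              exact div_le_two_mul_div_add (ha ht₀ (ht₀.trans ht) ht.le)
          _ = 2 * a x * (a t / (a t + a x) * h t) := by ring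
    _ = 2 * a x * essSup (fun t => a t / (a t + a x) * h t) ((μ₀).restrict (Iio x)) :=
        ENNReal.essSup_const_mul
    _ ≤ 2 * (a x * kernelEssSup a h x) := by
        rw [mul_assoc]
        gcongr
        exact essSup_mono_measure' Measure.restrict_le_self

lemma essSup_add_essSup_le_kernelIntegral_rpow_mul (hβ : 0 < β) (ha : MonotoneOn a (Ioi 0))
    (hae : ∀ᵐ t ∂μ₀, 0 < a t ∧ a t < ∞) :
    essSup (fun t => h t * (∫⁻ s in Ioo 0 t, g s) ^ (1 / β)) μ₀
        + essSup (fun t => a t * h t * (∫⁻ s in Ioi t, a s ^ (-β) * g s) ^ (1 / β)) μ₀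
      ≤ 8 * essSup (fun x => kernelIntegral a g β x ^ (1 / β) * kernelEssSup a h x) μ₀ := by
  set A := essSup (fun x => kernelIntegral a g β x ^ (1 / β) * kernelEssSup a h x) μ₀
  have hA : ∀ᵐ x ∂μ₀, kernelIntegral a g β x ^ (1 / β) * kernelEssSup a h x ≤ A :=
    ENNReal.ae_le_essSup _
  have hp : 0 < 1 / β := by positivity
  have h₁ : essSup (fun t => h t * (∫⁻ s in Ioo 0 t, g s) ^ (1 / β)) μ₀ ≤ 4 * A := by
    have key := essSup_mul_measure_Ioo_rpow_le hp (l := 0) (f := h) (ν := volume.withDensity g)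
      (c := 4 * A) ?_
    · simpa only [withDensity_apply _ measurableSet_Ioo] using key
    filter_upwards [ae_restrict_mem measurableSet_Ioi, hae, hA] with x (hx : 0 < x) hax hxA
    rw [withDensity_apply _ measurableSet_Ioo]
    calc essSup h ((μ₀).restrict (Ioi x)) * (∫⁻ t in Ioo 0 x, g t) ^ (1 / β)
        ≤ 2 * kernelEssSup a h x * (2 * kernelIntegral a g β x ^ (1 / β)) :=
          mul_le_mul' (essSup_restrict_Ioi_le_kernelEssSup ha hae hx)
            (lintegral_Ioo_rpow_le_kernelIntegral hβ ha hx hax.1.ne' hax.2.ne)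
      _ = 4 * (kernelIntegral a g β x ^ (1 / β) * kernelEssSup a h x) := by ring
      _ ≤ 4 * A := by gcongr
  have h₂ : essSup (fun t => a t * h t * (∫⁻ s in Ioi t, a s ^ (-β) * g s) ^ (1 / β)) μ₀
      ≤ 4 * A := by
    have key := essSup_mul_measure_Ioi_rpow_le hp (l := 0) (f := fun t => a t * h t)
      (ν := volume.withDensity fun s => a s ^ (-β) * g s) (c := 4 * A) ?_
    · simpa only [withDensity_apply _ measurableSet_Ioi] using key
    filter_upwards [ae_restrict_mem measurableSet_Ioi, hae, hA] with x (hx : 0 < x) hax hxA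
    rw [withDensity_apply _ measurableSet_Ioi]
    calc essSup (fun t => a t * h t) ((μ₀).restrict (Iio x))
          * (∫⁻ t in Ioi x, a t ^ (-β) * g t) ^ (1 / β)
        ≤ 2 * (a x * kernelEssSup a h x) * (∫⁻ t in Ioi x, a t ^ (-β) * g t) ^ (1 / β) := by
          gcongr
          exact essSup_restrict_Iio_le_kernelEssSup ha hax.1.ne' hax.2.ne
      _ = 2 * kernelEssSup a h x * (a x * (∫⁻ t in Ioi x, a t ^ (-β) * g t) ^ (1 / β)) := by
          ring
      _ ≤ 2 * kernelEssSup a h x * (2 * kernelIntegral a g β x ^ (1 / β)) := by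
          gcongr 2 * kernelEssSup a h x * ?_
          exact mul_lintegral_Ioi_rpow_le_kernelIntegral hβ ha hx hax.2.ne
      _ = 4 * (kernelIntegral a g β x ^ (1 / β) * kernelEssSup a h x) := by ring
      _ ≤ 4 * A := by gcongr
  calc _ ≤ 4 * A + 4 * A := add_le_add h₁ h₂
    _ = 8 * A := by ring

end Kernel

/-- Gluing lemma (Lemma 2.3): for `β > 0`, a nondecreasing weight `a` on `(0,∞)` and
nonnegative measurable `g, h`, with `𝒜(x,t) = a x / (a x + a t)`,
`esssup_x (∫_0^∞ 𝒜(x,t)^β g t dt)^{1/β} (esssup_t 𝒜(t,x) h t)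
  ≈ esssup_x h x (∫_0^x g)^{1/β} + esssup_x a x * h x * (∫_x^∞ a^{-β} g)^{1/β}`,
with equivalence constants depending only on `β`. -/
theorem gluing_integral_esssup (β : ℝ) (hβ : 0 < β) :
    ∃ c C : ℝ≥0∞, 0 < c ∧ c < ∞ ∧ 0 < C ∧ C < ∞ ∧
      ∀ a g h : ℝ → ℝ≥0∞, Measurable a → Measurable g → Measurable h →
        MonotoneOn a (Ioi 0) →
        (∀ᵐ x ∂(volume.restrict (Ioi (0:ℝ))), 0 < a x ∧ a x < ∞) →
        let A := essSup (fun x =>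
            (∫⁻ t in Ioi (0:ℝ), (a x / (a x + a t)) ^ β * g t) ^ (1 / β) *
            (essSup (fun t => a t / (a t + a x) * h t) (volume.restrict (Ioi (0:ℝ)))))
          (volume.restrict (Ioi (0:ℝ)))
        let B := essSup (fun x => h x * (∫⁻ t in Ioo (0:ℝ) x, g t) ^ (1 / β))
            (volume.restrict (Ioi (0:ℝ)))
          + essSup (fun x => a x * h x *
              (∫⁻ t in Ioi x, a t ^ (-β) * g t) ^ (1 / β))
            (volume.restrict (Ioi (0:ℝ)))
        c * B ≤ A ∧ A ≤ C * B := by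
  refine ⟨8⁻¹, 2 ^ (1 / β), by simp, by simp, by positivity, by finiteness, ?_⟩
  intro a g h _ _ _ ha hae A B
  constructor
  · calc 8⁻¹ * B ≤ 8⁻¹ * (8 * A) := by
          gcongr
          exact essSup_add_essSup_le_kernelIntegral_rpow_mul hβ ha hae
      _ = A := by rw [← mul_assoc, ENNReal.inv_mul_cancel (by norm_num) (by norm_num), one_mul]
  · exact essSup_kernelIntegral_rpow_mul_le hβ (hae.mono fun _ hx => hx.2.ne)
end

section
/- Let 0 < p ≤ 1 ≤ q < ∞ with p ≠ q, let v be a weight on (0,∞), u ∈ Ω̃₁ and w ∈ Ω_q. Define ω₂(x) := (∫_0^x u(t) dt)^{−1} v(x). Then for every nonnegative measurable f on (0,∞), ‖f‖_{M(Cop₁(u), Ces_{p,q}(w,v))} ≈ sup_{t∈(0,∞)} (∫_t^∞ w(s)^q ds)^{1/q} ‖f·ω₂‖_{p',(0,t)}, with equivalence constants depending only on p and q. -/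
/-!
Writing `U(x) = ∫_0^x u`, Fubini gives `‖g‖_{Cop₁(u)} = ∫_0^∞ g U`, so the substitution `η = g U`
identifies the left-hand side with the norm of the multiplier `h = f ω₂` from `L¹(0,∞)` to
`Ces_{p,q}(w,1)`.

For the lower bound (with constant `1`) test against `η = h^{p'}` on `(0,t)`, truncated to make
`∫ η` finite, and against the indicator of `{h > r} ∩ (0,t)` when `p = 1`.

For the upper bound let `F(t) = ∫_0^t (hη)^p`, let `τ_k` be the time at which `F` reaches `2^{kp}`
and let `B` be the supremum on the right. On `{2^k ≤ F^{1/p} < 2^{k+1}} ⊆ [τ_k,∞)` the Cesàro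
integrand is at most `2^{k+1} w`, and by Hölder
`2^{kp} ≲ F(τ_k) - F(τ_{k-1}) ≤ (‖h‖_{p',(0,τ_k)} ∫_{τ_{k-1}}^{τ_k} η)^p`. As
`(∫_{τ_k}^∞ w^q)^{1/q} ‖h‖_{p',(0,τ_k)} ≤ B`, level `k` contributes at most
`(C B ∫_{τ_{k-1}}^{τ_k} η)^q` with `C = 4 (2^p - 1)^{-1/p}`, and since `q ≥ 1` these sum over the
disjoint blocks `(τ_{k-1}, τ_k]` to at most `(C B ∫_0^∞ η)^q`.
-/

open MeasureTheory ENNReal Set Filter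

/-- `‖f‖_{p,s}`: the Lebesgue functional `(∫_s f^p)^{1/p}` for `p < ∞`,
and `esssup_s f` for `p = ∞`. -/
noncomputable def wNorm (p : ℝ≥0∞) (f : ℝ → ℝ≥0∞) (s : Set ℝ) : ℝ≥0∞ :=
  if p = ∞ then essSup f (volume.restrict s)
  else (∫⁻ x in s, f x ^ p.toReal) ^ (1 / p.toReal)

/-- The weighted Cesàro functional `‖f‖_{Ces_{p,q}(u,v)} = ‖ t ↦ ‖f‖_{p,v,(0,t)} ‖_{q,u,(0,∞)}`. -/
noncomputable def cesaroNorm (p q : ℝ≥0∞) (u v : ℝ → ℝ≥0∞) (f : ℝ → ℝ≥0∞) : ℝ≥0∞ :=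
  wNorm q (fun t => wNorm p (fun x => f x * v x) (Ioo 0 t) * u t) (Ioi 0)

/-- The weighted Copson functional `‖f‖_{Cop_{p,q}(u,v)} = ‖ t ↦ ‖f‖_{p,v,(t,∞)} ‖_{q,u,(0,∞)}`. -/
noncomputable def copsonNorm (p q : ℝ≥0∞) (u v : ℝ → ℝ≥0∞) (f : ℝ → ℝ≥0∞) : ℝ≥0∞ :=
  wNorm q (fun t => wNorm p (fun x => f x * v x) (Ioi t) * u t) (Ioi 0)

/-- The multiplier functional `‖f‖_{M(X,Y)} = sup { ‖f·g‖_Y / ‖g‖_X :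
g nonnegative measurable, g not a.e. zero on (0,∞) }`. -/
noncomputable def multNorm (X Y : (ℝ → ℝ≥0∞) → ℝ≥0∞) (f : ℝ → ℝ≥0∞) : ℝ≥0∞ :=
  ⨆ (g : ℝ → ℝ≥0∞) (_ : Measurable g ∧
      ¬ (∀ᵐ x ∂(volume.restrict (Ioi (0:ℝ))), g x = 0)),
    Y (fun x => f x * g x) / X g

/-- A weight on `(0,∞)`: measurable, positive and finite a.e. on `(0,∞)`. -/
def IsWeightOn (v : ℝ → ℝ≥0∞) : Prop :=
  Measurable v ∧ ∀ᵐ x ∂(volume.restrict (Ioi (0:ℝ))), 0 < v x ∧ v x < ∞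

/-- `u ∈ Ω_q`: `0 < ‖u‖_{q,(t,∞)} < ∞` for all `t > 0`. -/
def MemOmega (q : ℝ≥0∞) (u : ℝ → ℝ≥0∞) : Prop :=
  Measurable u ∧ ∀ t : ℝ, 0 < t → 0 < wNorm q u (Ioi t) ∧ wNorm q u (Ioi t) < ∞

/-- `u ∈ Ω̃_q`: `0 < ‖u‖_{q,(0,t)} < ∞` for all `t > 0`. -/
def MemOmegaDual (q : ℝ≥0∞) (u : ℝ → ℝ≥0∞) : Prop :=
  Measurable u ∧ ∀ t : ℝ, 0 < t → 0 < wNorm q u (Ioo 0 t) ∧ wNorm q u (Ioo 0 t) < ∞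

/-- The exponent `p'`: `p/(1−p)` if `p < 1`, `∞` if `p = 1`, `p/(p−1)` if `p > 1`. -/
noncomputable def dualExp (p : ℝ) : ℝ≥0∞ :=
  if p < 1 then ENNReal.ofReal (p / (1 - p))
  else if p = 1 then ∞
  else ENNReal.ofReal (p / (p - 1))

/-- An admissible function: continuous and strictly increasing on `[0,∞)`,
vanishing at `0` and tending to `∞` at `∞`. -/
def AdmissibleFn (U : ℝ → ℝ≥0∞) : Prop :=
  ContinuousOn U (Ici 0) ∧ StrictMonoOn U (Ici 0) ∧ U 0 = 0 ∧
    Tendsto U atTop (nhds ∞)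

/-- φ is equivalent to ψ on `(0,∞)` up to multiplicative constants. -/
def EquivOn (φ ψ : ℝ → ℝ≥0∞) : Prop :=
  ∃ c C : ℝ≥0∞, 0 < c ∧ C < ∞ ∧ ∀ x ∈ Ioi (0:ℝ), c * ψ x ≤ φ x ∧ φ x ≤ C * ψ x

/-- `φ ∈ Q_U`: φ is non-degenerate and `U`-quasiconcave, i.e. φ is equivalent to a
nondecreasing function on `(0,∞)`, `φ/U` is equivalent to a nonincreasing function on
`(0,∞)`, and `lim_{t→0+} φ(t) = lim_{t→∞} 1/φ(t) = lim_{t→∞} φ(t)/U(t)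
= lim_{t→0+} U(t)/φ(t) = 0`. -/
def MemQClass (U φ : ℝ → ℝ≥0∞) : Prop :=
  (∃ ψ : ℝ → ℝ≥0∞, MonotoneOn ψ (Ioi 0) ∧ EquivOn φ ψ) ∧
  (∃ ψ : ℝ → ℝ≥0∞, AntitoneOn ψ (Ioi 0) ∧ EquivOn (fun x => φ x / U x) ψ) ∧
  Tendsto φ (nhdsWithin 0 (Ioi 0)) (nhds 0) ∧
  Tendsto (fun t => (φ t)⁻¹) atTop (nhds 0) ∧
  Tendsto (fun t => φ t / U t) atTop (nhds 0) ∧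
  Tendsto (fun t => U t / φ t) (nhdsWithin 0 (Ioi 0)) (nhds 0)

open Topology

lemma wNorm_one (f : ℝ → ℝ≥0∞) (s : Set ℝ) : wNorm 1 f s = ∫⁻ x in s, f x := by
  simp [wNorm]

lemma wNorm_ofReal {q : ℝ} (hq : 0 < q) (f : ℝ → ℝ≥0∞) (s : Set ℝ) :
    wNorm (ENNReal.ofReal q) f s = (∫⁻ x in s, f x ^ q) ^ (1 / q) := by
  rw [wNorm, if_neg ofReal_ne_top, toReal_ofReal hq.le]

lemma wNorm_congr {p : ℝ≥0∞} {f g : ℝ → ℝ≥0∞} {s : Set ℝ} (hs : MeasurableSet s)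
    (hfg : EqOn f g s) : wNorm p f s = wNorm p g s := by
  unfold wNorm
  split_ifs
  · exact essSup_congr_ae ((ae_restrict_iff' hs).2 (ae_of_all _ hfg))
  · rw [setLIntegral_congr_fun hs fun x hx => by rw [hfg hx]]

lemma wNorm_mono_set_ae {p : ℝ≥0∞} {f : ℝ → ℝ≥0∞} {s t : Set ℝ} (hst : s ≤ᵐ[volume] t) :
    wNorm p f s ≤ wNorm p f t := by
  unfold wNorm
  split_ifs
  · exact essSup_mono_measure' (Measure.restrict_mono_ae hst)
  · exact rpow_le_rpow (lintegral_mono' (Measure.restrict_mono_ae hst) le_rfl) (by positivity)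

lemma wNorm_dualExp_one (h : ℝ → ℝ≥0∞) (s : Set ℝ) :
    wNorm (dualExp 1) h s = essSup h (volume.restrict s) := by
  simp [dualExp, wNorm]

lemma wNorm_dualExp_of_lt_one {p : ℝ} (hp : 0 < p) (hp1 : p < 1) (h : ℝ → ℝ≥0∞) (s : Set ℝ) :
    wNorm (dualExp p) h s = (∫⁻ x in s, h x ^ (p / (1 - p))) ^ ((1 - p) / p) := by
  rw [dualExp, if_pos hp1, wNorm_ofReal (div_pos hp (sub_pos.2 hp1)), one_div_div]

lemma lintegral_mul_rpow_le_wNorm_dualExp {p : ℝ} (hp : 0 < p) (hp1 : p ≤ 1) {h η : ℝ → ℝ≥0∞}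
    (hh : Measurable h) (hη : Measurable η) (s : Set ℝ) :
    ∫⁻ x in s, (h x * η x) ^ p ≤ (wNorm (dualExp p) h s * ∫⁻ x in s, η x) ^ p := by
  rcases hp1.eq_or_lt with rfl | hp1
  · simp only [rpow_one, wNorm_dualExp_one]
    calc ∫⁻ x in s, h x * η x ≤ ∫⁻ x in s, essSup h (volume.restrict s) * η x :=
          lintegral_mono_ae ((ae_le_essSup h).mono fun x hx => mul_le_mul_left hx _)
      _ = _ := lintegral_const_mul _ hη
  · have hconj : (1 / (1 - p)).HolderConjugate (1 / p) := by
      rw [Real.holderConjugate_iff]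
      exact ⟨by rw [lt_div_iff₀ (by linarith)]; linarith, by simp⟩
    have := ENNReal.lintegral_mul_le_Lp_mul_Lq (volume.restrict s) hconj
      (hh.pow_const p).aemeasurable (hη.pow_const p).aemeasurable
    simp only [Pi.mul_apply, ← mul_rpow_of_nonneg _ _ hp.le, ← rpow_mul, one_div_one_div,
      mul_one_div_cancel hp.ne', rpow_one] at this
    rw [wNorm_dualExp_of_lt_one hp hp1, mul_rpow_of_nonneg _ _ hp.le, ← rpow_mul,
      div_mul_cancel₀ _ hp.ne']
    simpa [div_eq_mul_one_div p] using this

lemma copsonNorm_one_one {u g : ℝ → ℝ≥0∞} (hu : Measurable u) (hg : Measurable g) :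
    copsonNorm 1 1 u (fun _ => 1) g = ∫⁻ x in Ioi 0, g x * ∫⁻ t in Ioo 0 x, u t := by
  have hswap : ∀ t x, (Ioi t).indicator g x * u t = g x * (Iio x).indicator u t := fun t x => by
    by_cases htx : t < x <;> simp [indicator, htx, mul_comm]
  have hK : Measurable (Function.uncurry fun t x => (Ioi t).indicator g x * u t) := by
    simp only [Function.uncurry_def, indicator_apply, mem_Ioi]
    exact (Measurable.ite (measurableSet_lt measurable_fst measurable_snd)
      (hg.comp measurable_snd) measurable_const).mul (hu.comp measurable_fst)
  simp only [copsonNorm, wNorm_one, mul_one]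
  calc ∫⁻ t in Ioi 0, (∫⁻ x in Ioi t, g x) * u t
      = ∫⁻ t in Ioi 0, ∫⁻ x in Ioi 0, (Ioi t).indicator g x * u t :=
        setLIntegral_congr_fun measurableSet_Ioi fun t (ht : 0 < t) => by
          rw [lintegral_mul_const _ (hg.indicator measurableSet_Ioi),
            lintegral_indicator measurableSet_Ioi, Measure.restrict_restrict measurableSet_Ioi,
            inter_eq_left.2 (Ioi_subset_Ioi ht.le)]
    _ = ∫⁻ x in Ioi 0, ∫⁻ t in Ioi 0, (Ioi t).indicator g x * u t :=
        lintegral_lintegral_swap hK.aemeasurable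
    _ = ∫⁻ x in Ioi 0, g x * ∫⁻ t in Ioo 0 x, u t := by
        simp_rw [hswap]
        congr 1; funext x
        rw [lintegral_const_mul _ (hu.indicator measurableSet_Iio),
          lintegral_indicator measurableSet_Iio, Measure.restrict_restrict measurableSet_Iio,
          Iio_inter_Ioi]

lemma measurable_setLIntegral_Ioo_zero (u : ℝ → ℝ≥0∞) :
    Measurable fun x => ∫⁻ t in Ioo 0 x, u t :=
  Monotone.measurable fun _ _ h => lintegral_mono_set (Ioo_subset_Ioo_right h)

lemma cesaroNorm_congr {P Q : ℝ≥0∞} {w v v' g g' : ℝ → ℝ≥0∞}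
    (hgv : EqOn (fun x => g x * v x) (fun x => g' x * v' x) (Ioi 0)) :
    cesaroNorm P Q w v g = cesaroNorm P Q w v' g' := by
  unfold cesaroNorm
  congr 2; funext t
  rw [wNorm_congr measurableSet_Ioo (hgv.mono Ioo_subset_Ioi_self)]

theorem multNorm_copsonNorm_cesaroNorm_eq {u : ℝ → ℝ≥0∞} (hu : MemOmegaDual 1 u) (P Q : ℝ≥0∞)
    (w v f : ℝ → ℝ≥0∞) :
    multNorm (copsonNorm 1 1 u fun _ => 1) (cesaroNorm P Q w v) f =
      multNorm (fun η => ∫⁻ x in Ioi 0, η x) (cesaroNorm P Q w fun _ => 1)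
        (fun x => f x * ((∫⁻ t in Ioo 0 x, u t)⁻¹ * v x)) := by
  set U := fun x => ∫⁻ t in Ioo 0 x, u t
  have hU : Measurable U := measurable_setLIntegral_Ioo_zero u
  have hU0 : ∀ x, 0 < x → U x ≠ 0 := fun x hx => by
    simpa [wNorm_one] using (hu.2 x hx).1.ne'
  have hUtop : ∀ x, 0 < x → U x ≠ ∞ := fun x hx => by
    simpa [wNorm_one] using (hu.2 x hx).2.ne
  apply le_antisymm
  · refine iSup₂_le fun g ⟨hg, hg0⟩ => ?_
    refine le_iSup₂_of_le (fun x => g x * U x) ⟨hg.mul hU, ?_⟩ ?_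
    · intro h0
      refine hg0 ?_
      filter_upwards [h0, ae_restrict_mem measurableSet_Ioi] with x hx hx0
      exact (mul_eq_zero.1 hx).resolve_right (hU0 x hx0)
    rw [copsonNorm_one_one hu.1 hg, cesaroNorm_congr (v' := fun _ => 1)
      (g' := fun x => f x * ((U x)⁻¹ * v x) * (g x * U x)) fun x (hx : 0 < x) => ?_]
    calc f x * g x * v x = f x * g x * v x * ((U x)⁻¹ * U x) := by
          rw [ENNReal.inv_mul_cancel (hU0 x hx) (hUtop x hx), mul_one]
      _ = _ := by ring
  · refine iSup₂_le fun η ⟨hη, hη0⟩ => ?_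
    have hηU : Measurable fun x => η x * (U x)⁻¹ := hη.mul hU.inv
    refine le_iSup₂_of_le (fun x => η x * (U x)⁻¹) ⟨hηU, ?_⟩ (le_of_eq ?_)
    · intro h0
      refine hη0 ?_
      filter_upwards [h0, ae_restrict_mem measurableSet_Ioi] with x hx hx0
      exact (mul_eq_zero.1 hx).resolve_right (ENNReal.inv_ne_zero.2 (hUtop x hx0))
    rw [copsonNorm_one_one hu.1 hηU, cesaroNorm_congr (v := fun _ => 1) (v' := v)
      (g' := fun x => f x * (η x * (U x)⁻¹)) fun x _ => by ring]
    congr 1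
    refine setLIntegral_congr_fun measurableSet_Ioi fun x (hx : 0 < x) => ?_
    rw [mul_assoc, ENNReal.inv_mul_cancel (hU0 x hx) (hUtop x hx), mul_one]

lemma cesaroNorm_ofReal {p q : ℝ} (hp : 0 < p) (hq : 0 < q) (w v g : ℝ → ℝ≥0∞) :
    cesaroNorm (ENNReal.ofReal p) (ENNReal.ofReal q) w v g =
      (∫⁻ t in Ioi 0, ((∫⁻ x in Ioo 0 t, (g x * v x) ^ p) ^ (1 / p) * w t) ^ q) ^ (1 / q) := by
  simp only [cesaroNorm, wNorm_ofReal hp, wNorm_ofReal hq]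

lemma iSup_rpow_lintegral_min_natCast {α : Type*} [MeasurableSpace α] {μ : Measure α} {r e : ℝ}
    (hr : 0 ≤ r) (he : 0 ≤ e) {h : α → ℝ≥0∞} (hh : Measurable h) :
    ⨆ n : ℕ, (∫⁻ x, min (h x) n ^ r ∂μ) ^ e = (∫⁻ x, h x ^ r ∂μ) ^ e := by
  have hmono : ∀ x, Monotone fun n : ℕ => min (h x) n ^ r := fun x m n hmn =>
    rpow_le_rpow (min_le_min_left _ (Nat.cast_le.2 hmn)) hr
  refine tendsto_nhds_unique (tendsto_atTop_iSup fun m n hmn => ?_) <|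
    (continuous_rpow_const.tendsto _).comp <| lintegral_tendsto_of_tendsto_of_monotone
      (fun n => ((hh.min measurable_const).pow_const r).aemeasurable) (ae_of_all _ hmono)
      (ae_of_all _ fun x => ?_)
  · exact rpow_le_rpow (lintegral_mono fun x => hmono x hmn) he
  · have hmin := (tendsto_const_nhds : Tendsto (fun _ : ℕ => h x) atTop (𝓝 (h x))).min
      tendsto_nat_nhds_top
    rw [min_top_right] at hmin
    exact (continuous_rpow_const.tendsto _).comp hmin

lemma rpow_div_one_sub_le_mul_rpow {p : ℝ} (hp : 0 < p) (hp1 : p < 1) {a b : ℝ≥0∞}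
    (hab : a ≤ b) : a ^ (p / (1 - p)) ≤ (b * a ^ (p / (1 - p))) ^ p :=
  calc a ^ (p / (1 - p)) = (a ^ (1 + p / (1 - p))) ^ p := by
        have h1p : 1 - p ≠ 0 := (sub_pos.2 hp1).ne'
        rw [← rpow_mul]; congr 1; field_simp; ring
    _ = (a * a ^ (p / (1 - p))) ^ p := by
        rw [rpow_add_of_nonneg _ _ zero_le_one (div_nonneg hp.le (by linarith)), rpow_one]
    _ ≤ (b * a ^ (p / (1 - p))) ^ p := by gcongr

section Lower

variable {p q : ℝ} {w h : ℝ → ℝ≥0∞} {t : ℝ}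

lemma rpow_lintegral_Ioi_mul_le_cesaroNorm (hp : 0 < p) (hq : 0 < q) (hw : Measurable w)
    (ht : 0 < t) (g : ℝ → ℝ≥0∞) :
    (∫⁻ s in Ioi t, w s ^ q) ^ (1 / q) * (∫⁻ x in Ioo 0 t, g x ^ p) ^ (1 / p) ≤
      cesaroNorm (ENNReal.ofReal p) (ENNReal.ofReal q) w (fun _ => 1) g := by
  rw [cesaroNorm_ofReal hp hq]
  calc _ = (∫⁻ s in Ioi t, ((∫⁻ x in Ioo 0 t, g x ^ p) ^ (1 / p) * w s) ^ q) ^ (1 / q) := by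
        simp_rw [mul_rpow_of_nonneg _ _ hq.le]
        rw [lintegral_const_mul _ (hw.pow_const q), mul_rpow_of_nonneg _ _ (by positivity),
          ← rpow_mul, mul_one_div_cancel hq.ne', rpow_one, mul_comm]
    _ ≤ (∫⁻ s in Ioi t, ((∫⁻ x in Ioo 0 s, (g x * 1) ^ p) ^ (1 / p) * w s) ^ q) ^ (1 / q) := by
        refine rpow_le_rpow (setLIntegral_mono' measurableSet_Ioi fun s (hs : t < s) => ?_)
          (by positivity)
        simp_rw [mul_one]
        gcongr ((∫⁻ x in ?_, _) ^ _ * _) ^ _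
        exact Ioo_subset_Ioo_right hs.le
    _ ≤ _ := by gcongr

lemma mul_le_multNorm_mul (hp : 0 < p) (hq : 0 < q) (hw : Measurable w) (ht : 0 < t)
    {η : ℝ → ℝ≥0∞} (hη : Measurable η) (hη0 : ∫⁻ x in Ioi 0, η x ≠ 0)
    (hηtop : ∫⁻ x in Ioi 0, η x ≠ ∞) :
    (∫⁻ s in Ioi t, w s ^ q) ^ (1 / q) * (∫⁻ x in Ioo 0 t, (h x * η x) ^ p) ^ (1 / p) ≤
      multNorm (fun η => ∫⁻ x in Ioi 0, η x)
        (cesaroNorm (ENNReal.ofReal p) (ENNReal.ofReal q) w fun _ => 1) h *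
        ∫⁻ x in Ioi 0, η x := by
  rw [← ENNReal.div_le_iff hη0 hηtop]
  refine le_trans
    (ENNReal.div_le_div_right (rpow_lintegral_Ioi_mul_le_cesaroNorm hp hq hw ht _) _) ?_
  unfold multNorm
  exact le_iSup₂_of_le η ⟨hη, fun h0 => hη0 ((lintegral_eq_zero_iff hη).2 h0)⟩ le_rfl

lemma mul_essSup_le_multNorm (hq : 0 < q) (hw : Measurable w) (hh : Measurable h) (ht : 0 < t) :
    (∫⁻ s in Ioi t, w s ^ q) ^ (1 / q) * essSup h (volume.restrict (Ioo 0 t)) ≤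
      multNorm (fun η => ∫⁻ x in Ioi 0, η x)
        (cesaroNorm (ENNReal.ofReal 1) (ENNReal.ofReal q) w fun _ => 1) h := by
  rw [← isLUB_Iio.sSup_eq (a := essSup h _), ENNReal.mul_sSup]
  refine iSup₂_le fun r (hr : r < _) => ?_
  set A := Ioo 0 t ∩ {x | r < h x}
  have hA : MeasurableSet A := measurableSet_Ioo.inter (hh measurableSet_Ioi)
  have hA0 : volume A ≠ 0 := fun h0 => hr.not_ge <| essSup_le_of_ae_le _ <| by
    rw [EventuallyLE, ae_restrict_iff' measurableSet_Ioo]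
    filter_upwards [measure_eq_zero_iff_ae_notMem.1 h0] with x hx hxt
    exact not_lt.1 fun hlt => hx ⟨hxt, hlt⟩
  have hAtop : volume A ≠ ∞ := ((measure_mono inter_subset_left).trans_lt measure_Ioo_lt_top).ne
  have hηA : ∫⁻ x in Ioi 0, A.indicator 1 x = volume A := by
    rw [lintegral_indicator_one hA, Measure.restrict_apply hA,
      inter_eq_left.2 fun x hx => hx.1.1]
  have hlow : r * volume A ≤ ∫⁻ x in Ioo 0 t, (h x * A.indicator 1 x) ^ (1 : ℝ) :=
    calc r * volume A = ∫⁻ _ in A, r := (setLIntegral_const _ _).symm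
      _ ≤ ∫⁻ x in A, h x := setLIntegral_mono hh fun x hx => hx.2.le
      _ = ∫⁻ x in Ioo 0 t, (h x * A.indicator 1 x) ^ (1 : ℝ) := by
        simp_rw [rpow_one, ← indicator_mul_right, Pi.one_apply, mul_one]
        rw [lintegral_indicator hA, Measure.restrict_restrict hA, inter_eq_left.2 inter_subset_left]
  have key := mul_le_multNorm_mul (h := h) one_pos hq hw ht (measurable_one.indicator hA)
    (hηA ▸ hA0) (hηA ▸ hAtop)
  rw [hηA, div_one, rpow_one] at key
  refine (ENNReal.mul_le_mul_iff_left hA0 hAtop).1 ?_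
  rw [mul_assoc]
  exact le_trans (by gcongr) key

lemma mul_rpow_lintegral_le_multNorm_of_le (hp : 0 < p) (hp1 : p < 1) (hq : 0 < q)
    (hw : Measurable w) (ht : 0 < t) {g : ℝ → ℝ≥0∞} (hg : Measurable g) (hgh : g ≤ h)
    (hfin : ∫⁻ x in Ioo 0 t, g x ^ (p / (1 - p)) ≠ ∞) :
    (∫⁻ s in Ioi t, w s ^ q) ^ (1 / q) * (∫⁻ x in Ioo 0 t, g x ^ (p / (1 - p))) ^ ((1 - p) / p) ≤
      multNorm (fun η => ∫⁻ x in Ioi 0, η x)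
        (cesaroNorm (ENNReal.ofReal p) (ENNReal.ofReal q) w fun _ => 1) h := by
  set X := ∫⁻ x in Ioo 0 t, g x ^ (p / (1 - p))
  rcases eq_or_ne X 0 with hX0 | hX0
  · rw [hX0, zero_rpow_of_pos (div_pos (by linarith) hp), mul_zero]
    exact bot_le
  set η := (Ioo 0 t).indicator fun x => g x ^ (p / (1 - p))
  have hηX : ∫⁻ x in Ioi 0, η x = X := by
    rw [lintegral_indicator measurableSet_Ioo, Measure.restrict_restrict measurableSet_Ioo,
      inter_eq_left.2 Ioo_subset_Ioi_self]
  have hlow : X ≤ ∫⁻ x in Ioo 0 t, (h x * η x) ^ p :=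
    setLIntegral_mono' measurableSet_Ioo fun x hx => by
      rw [show η x = g x ^ (p / (1 - p)) from indicator_of_mem hx _]
      exact rpow_div_one_sub_le_mul_rpow hp hp1 (hgh x)
  have key := mul_le_multNorm_mul (h := h) hp hq hw ht
    ((hg.pow_const _).indicator measurableSet_Ioo) (hηX ▸ hX0) (hηX ▸ hfin)
  rw [hηX] at key
  have hsplit : X ^ (1 / p) = X ^ ((1 - p) / p) * X := by
    rw [show 1 / p = (1 - p) / p + 1 by field_simp; ring,
      rpow_add_of_nonneg _ _ (div_nonneg (by linarith) hp.le) zero_le_one, rpow_one]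
  refine (ENNReal.mul_le_mul_iff_left hX0 hfin).1 ?_
  calc _ = (∫⁻ s in Ioi t, w s ^ q) ^ (1 / q) * X ^ (1 / p) := by rw [hsplit, mul_assoc]
    _ ≤ _ := by gcongr
    _ ≤ _ := key

theorem mul_rpow_lintegral_le_multNorm (hp : 0 < p) (hp1 : p < 1) (hq : 0 < q) (hw : Measurable w)
    (hh : Measurable h) (ht : 0 < t) :
    (∫⁻ s in Ioi t, w s ^ q) ^ (1 / q) * (∫⁻ x in Ioo 0 t, h x ^ (p / (1 - p))) ^ ((1 - p) / p) ≤
      multNorm (fun η => ∫⁻ x in Ioi 0, η x)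
        (cesaroNorm (ENNReal.ofReal p) (ENNReal.ofReal q) w fun _ => 1) h := by
  have hp' : 0 ≤ p / (1 - p) := div_nonneg hp.le (by linarith)
  rw [← iSup_rpow_lintegral_min_natCast hp' (div_nonneg (by linarith) hp.le) hh, ENNReal.mul_iSup]
  refine iSup_le fun n => mul_rpow_lintegral_le_multNorm_of_le hp hp1 hq hw ht
    (hh.min measurable_const) (fun x => min_le_left _ _) (ne_top_of_le_ne_top ?_ (
      lintegral_mono fun x => rpow_le_rpow (min_le_right _ _) hp'))
  rw [setLIntegral_const]
  exact mul_ne_top (rpow_ne_top_of_nonneg hp' (natCast_ne_top n)) measure_Ioo_lt_top.ne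

theorem iSup_le_multNorm (hp : 0 < p) (hp1 : p ≤ 1) (hq : 0 < q) (hw : Measurable w)
    (hh : Measurable h) :
    ⨆ t ∈ Ioi 0, (∫⁻ s in Ioi t, w s ^ q) ^ (1 / q) * wNorm (dualExp p) h (Ioo 0 t) ≤
      multNorm (fun η => ∫⁻ x in Ioi 0, η x)
        (cesaroNorm (ENNReal.ofReal p) (ENNReal.ofReal q) w fun _ => 1) h := by
  refine iSup₂_le fun t ht => ?_
  rcases hp1.eq_or_lt with rfl | hp1
  · rw [wNorm_dualExp_one]
    exact mul_essSup_le_multNorm hq hw hh ht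
  · rw [wNorm_dualExp_of_lt_one hp hp1]
    exact mul_rpow_lintegral_le_multNorm hp hp1 hq hw hh ht

end Lower

lemma ENNReal.tsum_rpow_le_rpow_tsum {ι : Type*} {q : ℝ} (hq : 1 ≤ q) (a : ι → ℝ≥0∞) :
    ∑' i, a i ^ q ≤ (∑' i, a i) ^ q := by
  have hsplit : ∀ x : ℝ≥0∞, x ^ q = x ^ (q - 1) * x := fun x => by
    conv_lhs =>
      rw [← sub_add_cancel q 1, rpow_add_of_nonneg _ _ (by linarith) zero_le_one, rpow_one]
  calc ∑' i, a i ^ q = ∑' i, a i ^ (q - 1) * a i := by simp_rw [hsplit]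
    _ ≤ ∑' i, (∑' j, a j) ^ (q - 1) * a i := ENNReal.tsum_le_tsum fun i =>
        mul_le_mul_left (rpow_le_rpow (ENNReal.le_tsum i) (by linarith)) _
    _ = (∑' j, a j) ^ q := by rw [ENNReal.tsum_mul_left, ← hsplit]

/-- `sInf ∅ = 0` when `ν (0, t]` never reaches `β`. -/
noncomputable def levelTime (ν : Measure ℝ) (β : ℝ≥0∞) : ℝ :=
  sInf {t | 0 < t ∧ β ≤ ν (Ioc 0 t)}

section LevelTime

variable {ν : Measure ℝ} {β β' : ℝ≥0∞} {s t : ℝ}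

lemma measurable_measure_Ioc_zero : Measurable fun t => ν (Ioc 0 t) :=
  Monotone.measurable fun _ _ h => measure_mono (Ioc_subset_Ioc_right h)

lemma levelTime_nonneg : 0 ≤ levelTime ν β :=
  Real.sInf_nonneg fun _ hs => hs.1.le

lemma levelTime_le (ht : 0 < t) (hβ : β ≤ ν (Ioc 0 t)) : levelTime ν β ≤ t :=
  csInf_le ⟨0, fun _ hs => hs.1.le⟩ ⟨ht, hβ⟩

lemma levelTime_mono (hββ' : β ≤ β') (ht : 0 < t) (hβ' : β' ≤ ν (Ioc 0 t)) :
    levelTime ν β ≤ levelTime ν β' :=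
  csInf_le_csInf ⟨0, fun _ hs => hs.1.le⟩ ⟨t, ht, hβ'⟩ fun _ hs => ⟨hs.1, hββ'.trans hs.2⟩

lemma levelTime_eq_zero (h : ∀ t, 0 < t → ν (Ioc 0 t) < β) : levelTime ν β = 0 := by
  have hempty : {t | 0 < t ∧ β ≤ ν (Ioc 0 t)} = ∅ :=
    eq_empty_of_forall_notMem fun t ht => (h t ht.1).not_ge ht.2
  rw [levelTime, hempty, Real.sInf_empty]

lemma measure_Ioc_le_of_lt_levelTime (hs : s < levelTime ν β) : ν (Ioc 0 s) ≤ β := by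
  rcases le_or_gt s 0 with hs0 | hs0
  · simp [Ioc_eq_empty (not_lt.2 hs0)]
  · by_contra hβ
    exact (levelTime_le hs0 (not_le.1 hβ).le).not_gt hs

lemma le_measure_Ioc_levelTime (hfin : ∀ t, ν (Ioc 0 t) ≠ ∞) (ht : 0 < t)
    (hβ : β ≤ ν (Ioc 0 t)) : β ≤ ν (Ioc 0 (levelTime ν β)) := by
  set τ := levelTime ν β
  have hinter : ⋂ r > τ, Ioc 0 r = Ioc 0 τ := by
    ext x
    simp only [mem_iInter, mem_Ioc]
    refine ⟨fun hx => ⟨(hx (τ + 1) (by linarith)).1, le_of_forall_gt_imp_ge_of_dense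
      fun r hr => (hx r hr).2⟩, fun hx r hr => ⟨hx.1, hx.2.trans hr.le⟩⟩
  have hlim := tendsto_measure_biInter_gt (μ := ν) (s := fun r => Ioc 0 r) (a := τ)
    (fun _ _ => measurableSet_Ioc.nullMeasurableSet) (fun _ _ _ hij => Ioc_subset_Ioc_right hij)
    ⟨τ + 1, by linarith, hfin _⟩
  rw [hinter] at hlim
  refine ge_of_tendsto hlim ?_
  filter_upwards [self_mem_nhdsWithin] with r (hr : τ < r)
  obtain ⟨t', ⟨-, ht'β⟩, ht'r⟩ :=
    exists_lt_of_csInf_lt (s := {t | 0 < t ∧ β ≤ ν (Ioc 0 t)}) ⟨t, ht, hβ⟩ hr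
  exact ht'β.trans (measure_mono (Ioc_subset_Ioc_right ht'r.le))

lemma measure_Ioc_levelTime_le [NullSingletonClass ν] : ν (Ioc 0 (levelTime ν β)) ≤ β := by
  set τ := levelTime ν β
  have hunion : Ioo 0 τ = ⋃ n : ℕ, Ioc 0 (τ - 1 / (n + 1)) := by
    ext x
    simp only [mem_Ioo, mem_iUnion, mem_Ioc]
    constructor
    · rintro ⟨hx0, hxτ⟩
      obtain ⟨n, hn⟩ := exists_nat_one_div_lt (sub_pos.2 hxτ)
      exact ⟨n, hx0, by linarith⟩
    · rintro ⟨n, hx0, hxn⟩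
      exact ⟨hx0, hxn.trans_lt (sub_lt_self _ Nat.one_div_pos_of_nat)⟩
  have hmono : Monotone fun n : ℕ => Ioc (0 : ℝ) (τ - 1 / (n + 1)) := fun m n hmn =>
    Ioc_subset_Ioc_right (sub_le_sub_left (Nat.one_div_le_one_div hmn) _)
  rw [← measure_congr (Ioo_ae_eq_Ioc (μ := ν)), hunion, hmono.measure_iUnion]
  exact iSup_le fun n =>
    measure_Ioc_le_of_lt_levelTime (sub_lt_self _ Nat.one_div_pos_of_nat)

lemma levelTime_pos (hfin : ∀ t, ν (Ioc 0 t) ≠ ∞) (hβ0 : β ≠ 0) (ht : 0 < t)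
    (hβ : β ≤ ν (Ioc 0 t)) : 0 < levelTime ν β := by
  refine levelTime_nonneg.lt_of_ne fun h => hβ0 ?_
  simpa [← h] using le_measure_Ioc_levelTime hfin ht hβ

lemma disjoint_Ioc_levelTime {β₀ β₁ β₂ β₃ : ℝ≥0∞} (h₁₂ : β₁ ≤ β₂) (h₂₃ : β₂ ≤ β₃) :
    Disjoint (Ioc (levelTime ν β₀) (levelTime ν β₁)) (Ioc (levelTime ν β₂) (levelTime ν β₃)) := by
  by_cases hS : ∃ t, 0 < t ∧ β₃ ≤ ν (Ioc 0 t)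
  · obtain ⟨t, ht, hβ⟩ := hS
    exact Ioc_disjoint_Ioc_of_le (levelTime_mono h₁₂ ht (h₂₃.trans hβ))
  · simp only [not_exists, not_and, not_le] at hS
    rw [levelTime_eq_zero hS, Ioc_eq_empty (not_lt.2 levelTime_nonneg)]
    exact disjoint_empty _

end LevelTime

lemma two_rpow_sub_one_rpow_ne_zero {p : ℝ} (hp : 0 < p) :
    ((2 : ℝ≥0∞) ^ p - 1) ^ (1 / p) ≠ 0 :=
  (rpow_pos (tsub_pos_of_lt (one_lt_rpow one_lt_two hp))
    (ne_top_of_le_ne_top (rpow_ne_top_of_nonneg hp.le ofNat_ne_top) tsub_le_self)).ne'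

lemma two_rpow_sub_one_rpow_ne_top {p : ℝ} (hp : 0 < p) :
    ((2 : ℝ≥0∞) ^ p - 1) ^ (1 / p) ≠ ∞ :=
  rpow_ne_top_of_nonneg (by positivity)
    (ne_top_of_le_ne_top (rpow_ne_top_of_nonneg hp.le ofNat_ne_top) tsub_le_self)

noncomputable def dyadicConst (p : ℝ) : ℝ≥0∞ := 4 / ((2 : ℝ≥0∞) ^ p - 1) ^ (1 / p)

lemma dyadicConst_ne_zero {p : ℝ} (hp : 0 < p) : dyadicConst p ≠ 0 :=
  ENNReal.div_ne_zero.2 ⟨by norm_num, two_rpow_sub_one_rpow_ne_top hp⟩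

lemma dyadicConst_ne_top {p : ℝ} (hp : 0 < p) : dyadicConst p ≠ ∞ :=
  ENNReal.div_ne_top (by norm_num) (two_rpow_sub_one_rpow_ne_zero hp)

noncomputable def dyadicTime (ν : Measure ℝ) (p : ℝ) (k : ℤ) : ℝ :=
  levelTime ν (((2 : ℝ≥0∞) ^ k) ^ p)

section Dyadic

variable {ν μ : Measure ℝ} {p q : ℝ} {w D : ℝ → ℝ≥0∞} {B : ℝ≥0∞}

lemma two_zpow_rpow_le {k l : ℤ} (hp : 0 < p) (hkl : k ≤ l) :
    ((2 : ℝ≥0∞) ^ k) ^ p ≤ ((2 : ℝ≥0∞) ^ l) ^ p :=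
  rpow_le_rpow (zpow_le_of_le one_le_two hkl) hp.le

lemma two_zpow_rpow_eq_add (hp : 0 < p) (k : ℤ) :
    ((2 : ℝ≥0∞) ^ k) ^ p =
      ((2 : ℝ≥0∞) ^ (k - 1)) ^ p + (2 ^ (k - 1) * ((2 : ℝ≥0∞) ^ p - 1) ^ (1 / p)) ^ p := by
  have hfin : ((2 : ℝ≥0∞) ^ (k - 1)) ^ p ≠ ∞ :=
    rpow_ne_top_of_nonneg hp.le (zpow_lt_top two_ne_zero ofNat_ne_top _).ne
  have htwo : (2 : ℝ≥0∞) ^ k = 2 ^ (k - 1) * 2 := by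
    simpa using ENNReal.zpow_add (x := 2) two_ne_zero ofNat_ne_top (k - 1) 1
  rw [mul_rpow_of_nonneg _ _ hp.le, ← rpow_mul, one_div_mul_cancel hp.ne', rpow_one,
    ENNReal.mul_sub fun _ _ => hfin, mul_one, add_tsub_cancel_of_le
      (le_mul_of_one_le_right' (one_lt_rpow one_lt_two hp).le), ← mul_rpow_of_nonneg _ _ hp.le,
    htwo]

lemma measure_dyadicBlock_ge [NullSingletonClass ν] (hfin : ∀ t, ν (Ioc 0 t) ≠ ∞) (hp : 0 < p)
    {k : ℤ} {t : ℝ} (ht : 0 < t) (hk : ((2 : ℝ≥0∞) ^ k) ^ p ≤ ν (Ioc 0 t)) :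
    (2 ^ (k - 1) * ((2 : ℝ≥0∞) ^ p - 1) ^ (1 / p)) ^ p ≤
      ν (Ioc (dyadicTime ν p (k - 1)) (dyadicTime ν p k)) := by
  have hτ : dyadicTime ν p (k - 1) ≤ dyadicTime ν p k :=
    levelTime_mono (two_zpow_rpow_le hp (by omega)) ht hk
  have hsplit : ν (Ioc 0 (dyadicTime ν p k)) =
      ν (Ioc 0 (dyadicTime ν p (k - 1))) + ν (Ioc (dyadicTime ν p (k - 1)) (dyadicTime ν p k)) := by
    rw [← measure_union (Ioc_disjoint_Ioc_of_le le_rfl) measurableSet_Ioc,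
      Ioc_union_Ioc_eq_Ioc (show 0 ≤ dyadicTime ν p (k - 1) from levelTime_nonneg) hτ]
  have hreach := le_measure_Ioc_levelTime hfin ht hk
  rw [← dyadicTime, hsplit, two_zpow_rpow_eq_add hp] at hreach
  exact (ENNReal.add_le_add_iff_left (rpow_ne_top_of_nonneg hp.le
    (zpow_lt_top two_ne_zero ofNat_ne_top _).ne)).1
    (hreach.trans (add_le_add_left measure_Ioc_levelTime_le _))

lemma two_zpow_mul_tail_le [NullSingletonClass ν] (hfin : ∀ t, ν (Ioc 0 t) ≠ ∞) (hp : 0 < p)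
    (hblock : ∀ a b, 0 ≤ a → ν (Ioc a b) ≤ (D b * μ (Ioc a b)) ^ p)
    (hB : ∀ t, 0 < t → (∫⁻ s in Ioi t, w s ^ q) ^ (1 / q) * D t ≤ B)
    {k : ℤ} {t : ℝ} (ht : 0 < t) (hk : ((2 : ℝ≥0∞) ^ k) ^ p ≤ ν (Ioc 0 t)) :
    2 ^ (k + 1) * (∫⁻ s in Ioi (dyadicTime ν p k), w s ^ q) ^ (1 / q) ≤
      dyadicConst p * B * μ (Ioc (dyadicTime ν p (k - 1)) (dyadicTime ν p k)) := by
  set c := ((2 : ℝ≥0∞) ^ p - 1) ^ (1 / p)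
  have hτ : 0 < dyadicTime ν p k :=
    levelTime_pos hfin (rpow_pos (zpow_pos two_ne_zero ofNat_ne_top _)
      (zpow_lt_top two_ne_zero ofNat_ne_top _).ne).ne' ht hk
  have hmass : 2 ^ (k - 1) * c ≤ D (dyadicTime ν p k) *
      μ (Ioc (dyadicTime ν p (k - 1)) (dyadicTime ν p k)) :=
    (rpow_le_rpow_iff hp).1 ((measure_dyadicBlock_ge hfin hp ht hk).trans
      (hblock _ _ levelTime_nonneg))
  have hconst : (2 : ℝ≥0∞) ^ (k + 1) = dyadicConst p * (2 ^ (k - 1) * c) := by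
    rw [dyadicConst, mul_comm _ c, ← mul_assoc, ENNReal.div_mul_cancel
      (two_rpow_sub_one_rpow_ne_zero hp) (two_rpow_sub_one_rpow_ne_top hp),
      show k + 1 = 2 + (k - 1) by ring, ENNReal.zpow_add two_ne_zero ofNat_ne_top]
    norm_num
  calc 2 ^ (k + 1) * (∫⁻ s in Ioi (dyadicTime ν p k), w s ^ q) ^ (1 / q)
      ≤ dyadicConst p * (D (dyadicTime ν p k) *
          μ (Ioc (dyadicTime ν p (k - 1)) (dyadicTime ν p k))) *
          (∫⁻ s in Ioi (dyadicTime ν p k), w s ^ q) ^ (1 / q) := by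
        rw [hconst]; gcongr
    _ = dyadicConst p * ((∫⁻ s in Ioi (dyadicTime ν p k), w s ^ q) ^ (1 / q) *
          D (dyadicTime ν p k)) * μ (Ioc (dyadicTime ν p (k - 1)) (dyadicTime ν p k)) := by ring
    _ ≤ _ := by gcongr; exact hB _ hτ

lemma setLIntegral_dyadicLevel_le [NullSingletonClass ν] (hfin : ∀ t, ν (Ioc 0 t) ≠ ∞)
    (hp : 0 < p) (hq : 0 < q) (hblock : ∀ a b, 0 ≤ a → ν (Ioc a b) ≤ (D b * μ (Ioc a b)) ^ p)
    (hB : ∀ t, 0 < t → (∫⁻ s in Ioi t, w s ^ q) ^ (1 / q) * D t ≤ B) (k : ℤ) :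
    ∫⁻ t in {t | 0 < t ∧ ν (Ioc 0 t) ^ (1 / p) ∈ Ico (2 ^ k) (2 ^ (k + 1))},
        (ν (Ioc 0 t) ^ (1 / p) * w t) ^ q ≤
      (dyadicConst p * B * μ (Ioc (dyadicTime ν p (k - 1)) (dyadicTime ν p k))) ^ q := by
  set E := {t | 0 < t ∧ ν (Ioc 0 t) ^ (1 / p) ∈ Ico (2 ^ k) (2 ^ (k + 1))}
  have hreach : ∀ t ∈ E, ((2 : ℝ≥0∞) ^ k) ^ p ≤ ν (Ioc 0 t) := fun t ht => by
    simpa [one_div, le_rpow_inv_iff hp] using ht.2.1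
  rcases E.eq_empty_or_nonempty with hE | ⟨t, htE⟩
  · simp [hE]
  have hEmeas : MeasurableSet E :=
    measurableSet_Ioi.inter ((measurable_measure_Ioc_zero.pow_const _) measurableSet_Ico)
  have hEτ : E ⊆ Ici (dyadicTime ν p k) := fun s hs => levelTime_le hs.1 (hreach s hs)
  have h2fin : ((2 : ℝ≥0∞) ^ (k + 1)) ^ q ≠ ∞ :=
    rpow_ne_top_of_nonneg hq.le (zpow_lt_top two_ne_zero ofNat_ne_top _).ne
  calc ∫⁻ t in E, (ν (Ioc 0 t) ^ (1 / p) * w t) ^ q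
      ≤ ∫⁻ t in E, (2 ^ (k + 1) * w t) ^ q :=
        setLIntegral_mono' hEmeas fun s hs => by gcongr; exact hs.2.2.le
    _ = (2 ^ (k + 1)) ^ q * ∫⁻ t in E, w t ^ q := by
        simp_rw [mul_rpow_of_nonneg _ _ hq.le]; exact lintegral_const_mul' _ _ h2fin
    _ ≤ (2 ^ (k + 1)) ^ q * ∫⁻ t in Ioi (dyadicTime ν p k), w t ^ q := by
        rw [setLIntegral_congr (Ioi_ae_eq_Ici (μ := volume))]
        gcongr
    _ = (2 ^ (k + 1) * (∫⁻ t in Ioi (dyadicTime ν p k), w t ^ q) ^ (1 / q)) ^ q := by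
        rw [mul_rpow_of_nonneg _ _ hq.le, ← rpow_mul, one_div_mul_cancel hq.ne', rpow_one]
    _ ≤ _ := rpow_le_rpow (two_zpow_mul_tail_le hfin hp hblock hB htE.1 (hreach t htE)) hq.le

lemma tsum_measure_dyadicBlock_le (hp : 0 < p) :
    ∑' k : ℤ, μ (Ioc (dyadicTime ν p (k - 1)) (dyadicTime ν p k)) ≤ μ (Ioi 0) := by
  have hdisj : ∀ k l : ℤ, k < l → Disjoint (Ioc (dyadicTime ν p (k - 1)) (dyadicTime ν p k))
      (Ioc (dyadicTime ν p (l - 1)) (dyadicTime ν p l)) := fun k l hkl =>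
    disjoint_Ioc_levelTime (two_zpow_rpow_le hp (by omega)) (two_zpow_rpow_le hp (by omega))
  rw [← measure_iUnion (fun k l hkl => (hkl.lt_or_gt.elim (hdisj k l) fun h => (hdisj l k h).symm))
    fun _ => measurableSet_Ioc]
  exact measure_mono (iUnion_subset fun k x hx => levelTime_nonneg.trans_lt hx.1)

end Dyadic

theorem lintegral_measure_Ioc_rpow_mul_le {ν μ : Measure ℝ} [NullSingletonClass ν] {p q : ℝ}
    {w D : ℝ → ℝ≥0∞} {B : ℝ≥0∞} (hp : 0 < p) (hq : 1 ≤ q) (hfin : ∀ t, ν (Ioc 0 t) ≠ ∞)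
    (hblock : ∀ a b, 0 ≤ a → ν (Ioc a b) ≤ (D b * μ (Ioc a b)) ^ p)
    (hB : ∀ t, 0 < t → (∫⁻ s in Ioi t, w s ^ q) ^ (1 / q) * D t ≤ B) :
    ∫⁻ t in Ioi 0, (ν (Ioc 0 t) ^ (1 / p) * w t) ^ q ≤ (dyadicConst p * B * μ (Ioi 0)) ^ q := by
  have hq0 : 0 < q := by linarith
  set E : ℤ → Set ℝ := fun k => {t | 0 < t ∧ ν (Ioc 0 t) ^ (1 / p) ∈ Ico (2 ^ k) (2 ^ (k + 1))}
  set Δ : ℤ → ℝ≥0∞ := fun k => μ (Ioc (dyadicTime ν p (k - 1)) (dyadicTime ν p k))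
  have hZ : MeasurableSet {t | ν (Ioc 0 t) = 0} :=
    measurable_measure_Ioc_zero (measurableSet_singleton 0)
  have hcover : Ioi 0 ⊆ {t | ν (Ioc 0 t) = 0} ∪ ⋃ k, E k := by
    intro t ht
    by_cases h0 : ν (Ioc 0 t) = 0
    · exact Or.inl h0
    obtain ⟨k, hk⟩ := exists_mem_Ico_zpow (x := ν (Ioc 0 t) ^ (1 / p))
      (rpow_pos (pos_iff_ne_zero.2 h0) (hfin t)).ne'
      (rpow_ne_top_of_nonneg (by positivity) (hfin t)) one_lt_two ofNat_ne_top
    exact Or.inr (mem_iUnion.2 ⟨k, ht, hk⟩)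
  have hzero : ∫⁻ t in {t | ν (Ioc 0 t) = 0}, (ν (Ioc 0 t) ^ (1 / p) * w t) ^ q = 0 := by
    rw [setLIntegral_congr_fun hZ (g := 0) fun t (ht : ν (Ioc 0 t) = 0) => by
      simp [ht, zero_rpow_of_pos (inv_pos.2 hp), zero_rpow_of_pos hq0]]
    exact lintegral_zero
  calc ∫⁻ t in Ioi 0, (ν (Ioc 0 t) ^ (1 / p) * w t) ^ q
      ≤ (∫⁻ t in {t | ν (Ioc 0 t) = 0}, (ν (Ioc 0 t) ^ (1 / p) * w t) ^ q) +
          ∫⁻ t in ⋃ k, E k, (ν (Ioc 0 t) ^ (1 / p) * w t) ^ q :=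
        (lintegral_mono_set hcover).trans (lintegral_union_le _ _ _)
    _ ≤ ∑' k, ∫⁻ t in E k, (ν (Ioc 0 t) ^ (1 / p) * w t) ^ q := by
        rw [hzero, zero_add]; exact lintegral_iUnion_le _ _
    _ ≤ ∑' k, (dyadicConst p * B * Δ k) ^ q :=
        ENNReal.tsum_le_tsum fun k => setLIntegral_dyadicLevel_le hfin hp hq0 hblock hB k
    _ = (dyadicConst p * B) ^ q * ∑' k, Δ k ^ q := by
        simp_rw [mul_rpow_of_nonneg _ _ hq0.le, ENNReal.tsum_mul_left]
    _ ≤ (dyadicConst p * B) ^ q * (∑' k, Δ k) ^ q := by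
        gcongr; exact ENNReal.tsum_rpow_le_rpow_tsum hq _
    _ ≤ (dyadicConst p * B) ^ q * μ (Ioi 0) ^ q := by
        gcongr; exact tsum_measure_dyadicBlock_le hp
    _ = _ := (mul_rpow_of_nonneg _ _ hq0.le).symm

section Upper

variable {p q : ℝ} {w h : ℝ → ℝ≥0∞}

lemma lintegral_Ioc_mul_rpow_le (hp : 0 < p) (hp1 : p ≤ 1) {η : ℝ → ℝ≥0∞} (hh : Measurable h)
    (hη : Measurable η) {a : ℝ} (ha : 0 ≤ a) (b : ℝ) :
    ∫⁻ x in Ioc a b, (h x * η x) ^ p ≤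
      (wNorm (dualExp p) h (Ioo 0 b) * ∫⁻ x in Ioc a b, η x) ^ p := by
  refine (lintegral_mul_rpow_le_wNorm_dualExp hp hp1 hh hη _).trans ?_
  gcongr
  exact wNorm_mono_set_ae ((Ioc_subset_Ioc_left ha).eventuallyLE.trans Ioo_ae_eq_Ioc.symm.le)

lemma iSup_mul_lintegral_eq_top (hp : 0 < p) (hp1 : p ≤ 1) (hq : 0 < q)
    (hw : ∀ t, 0 < t → ∫⁻ s in Ioi t, w s ^ q ≠ 0) (hh : Measurable h) {η : ℝ → ℝ≥0∞}
    (hη : Measurable η) {t : ℝ} (ht : ∫⁻ x in Ioc 0 t, (h x * η x) ^ p = ∞) :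
    (⨆ t ∈ Ioi 0, (∫⁻ s in Ioi t, w s ^ q) ^ (1 / q) * wNorm (dualExp p) h (Ioo 0 t)) *
      ∫⁻ x in Ioi 0, η x = ∞ := by
  have ht0 : 0 < t := by
    by_contra ht0
    simp [Ioc_eq_empty (not_lt.2 (not_lt.1 ht0))] at ht
  have hHolder := lintegral_Ioc_mul_rpow_le hp hp1 hh hη le_rfl t
  rw [ht, top_le_iff, rpow_eq_top_iff_of_pos hp] at hHolder
  refine top_le_iff.1 ?_
  calc ∞ = (∫⁻ s in Ioi t, w s ^ q) ^ (1 / q) *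
        (wNorm (dualExp p) h (Ioo 0 t) * ∫⁻ x in Ioc 0 t, η x) := by
        rw [hHolder, mul_top ((rpow_eq_zero_iff_of_pos (one_div_pos.2 hq)).not.2 (hw t ht0))]
    _ ≤ _ := by
        rw [← mul_assoc]
        exact mul_le_mul' (le_iSup₂_of_le t ht0 le_rfl) (lintegral_mono_set Ioc_subset_Ioi_self)

theorem cesaroNorm_mul_le (hp : 0 < p) (hp1 : p ≤ 1) (hq : 1 ≤ q)
    (hw : ∀ t, 0 < t → ∫⁻ s in Ioi t, w s ^ q ≠ 0) (hh : Measurable h) {η : ℝ → ℝ≥0∞}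
    (hη : Measurable η) :
    cesaroNorm (ENNReal.ofReal p) (ENNReal.ofReal q) w (fun _ => 1) (fun x => h x * η x) ≤
      dyadicConst p * (⨆ t ∈ Ioi 0, (∫⁻ s in Ioi t, w s ^ q) ^ (1 / q) *
        wNorm (dualExp p) h (Ioo 0 t)) * ∫⁻ x in Ioi 0, η x := by
  have hq0 : 0 < q := by linarith
  set B := ⨆ t ∈ Ioi 0, (∫⁻ s in Ioi t, w s ^ q) ^ (1 / q) * wNorm (dualExp p) h (Ioo 0 t)
  by_cases hinf : ∃ t, ∫⁻ x in Ioc 0 t, (h x * η x) ^ p = ∞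
  · obtain ⟨t, ht⟩ := hinf
    rw [mul_assoc, iSup_mul_lintegral_eq_top hp hp1 hq0 hw hh hη ht,
      mul_top (dyadicConst_ne_zero hp)]
    exact le_top
  have hfin : ∀ t, ∫⁻ x in Ioc 0 t, (h x * η x) ^ p ≠ ∞ := fun t ht => hinf ⟨t, ht⟩
  set ν := volume.withDensity fun x => (h x * η x) ^ p
  have hν : ∀ a b, ν (Ioc a b) = ∫⁻ x in Ioc a b, (h x * η x) ^ p :=
    fun a b => withDensity_apply _ measurableSet_Ioc
  have hblock : ∀ a b, 0 ≤ a → ν (Ioc a b) ≤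
      (wNorm (dualExp p) h (Ioo 0 b) * volume.withDensity η (Ioc a b)) ^ p := fun a b ha => by
    rw [hν, withDensity_apply _ measurableSet_Ioc]
    exact lintegral_Ioc_mul_rpow_le hp hp1 hh hη ha b
  have hdyadic := lintegral_measure_Ioc_rpow_mul_le (w := w) (B := B) hp hq
    (fun t => hν 0 t ▸ hfin t) hblock fun t ht => le_iSup₂_of_le t ht le_rfl
  rw [withDensity_apply _ measurableSet_Ioi] at hdyadic
  rw [cesaroNorm_ofReal hp hq0]
  calc (∫⁻ t in Ioi 0, ((∫⁻ x in Ioo 0 t, (h x * η x * 1) ^ p) ^ (1 / p) * w t) ^ q) ^ (1 / q)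
      ≤ (∫⁻ t in Ioi 0, (ν (Ioc 0 t) ^ (1 / p) * w t) ^ q) ^ (1 / q) := by
        simp_rw [mul_one, hν]
        gcongr
        exact Ioo_subset_Ioc_self
    _ ≤ ((dyadicConst p * B * ∫⁻ x in Ioi 0, η x) ^ q) ^ (1 / q) := by gcongr
    _ = _ := by rw [← rpow_mul, mul_one_div_cancel hq0.ne', rpow_one]

theorem multNorm_le (hp : 0 < p) (hp1 : p ≤ 1) (hq : 1 ≤ q)
    (hw : ∀ t, 0 < t → ∫⁻ s in Ioi t, w s ^ q ≠ 0) (hh : Measurable h) :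
    multNorm (fun η => ∫⁻ x in Ioi 0, η x)
        (cesaroNorm (ENNReal.ofReal p) (ENNReal.ofReal q) w fun _ => 1) h ≤
      dyadicConst p * ⨆ t ∈ Ioi 0, (∫⁻ s in Ioi t, w s ^ q) ^ (1 / q) *
        wNorm (dualExp p) h (Ioo 0 t) :=
  iSup₂_le fun _ hη => ENNReal.div_le_of_le_mul (cesaroNorm_mul_le hp hp1 hq hw hh hη.1)

end Upper

theorem multiplier_r_eq_one_q_ge_one_general (p q : ℝ) (hp : 0 < p) (hp1 : p ≤ 1)
    (hq1 : 1 ≤ q) :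
    ∃ c C : ℝ≥0∞, 0 < c ∧ c < ∞ ∧ 0 < C ∧ C < ∞ ∧
      ∀ u v w : ℝ → ℝ≥0∞, IsWeightOn v → MemOmegaDual 1 u →
        MemOmega (ENNReal.ofReal q) w →
        ∀ f : ℝ → ℝ≥0∞, Measurable f →
          let ω₂ : ℝ → ℝ≥0∞ := fun x => (∫⁻ t in Ioo (0:ℝ) x, u t)⁻¹ * v x
          let lhs := multNorm (copsonNorm 1 1 u (fun _ => 1))
            (cesaroNorm (ENNReal.ofReal p) (ENNReal.ofReal q) w v) f
          let rhs := ⨆ t ∈ Ioi (0:ℝ),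
            (∫⁻ s in Ioi t, w s ^ q) ^ (1 / q) *
              wNorm (dualExp p) (fun x => f x * ω₂ x) (Ioo 0 t)
          c * rhs ≤ lhs ∧ lhs ≤ C * rhs := by
  refine ⟨1, dyadicConst p, one_pos, one_lt_top, pos_iff_ne_zero.2 (dyadicConst_ne_zero hp),
    (dyadicConst_ne_top hp).lt_top, fun u v w hv hu hw f hf => ?_⟩
  intro ω₂ lhs rhs
  have hq : 0 < q := by linarith
  have hh : Measurable fun x => f x * ω₂ x :=
    hf.mul ((measurable_setLIntegral_Ioo_zero u).inv.mul hv.1)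
  have hw0 : ∀ t, 0 < t → ∫⁻ s in Ioi t, w s ^ q ≠ 0 := fun t ht h0 => by
    simpa [wNorm_ofReal hq, h0, zero_rpow_of_pos (inv_pos.2 hq)] using (hw.2 t ht).1
  rw [show lhs = _ from multNorm_copsonNorm_cesaroNorm_eq hu _ _ w v f, one_mul]
  exact ⟨iSup_le_multNorm hp hp1 hq hw.1 hh, multNorm_le hp hp1 hq1 hw0 hh⟩

/-- Multipliers from `Cop₁(u)` to `Ces_{p,q}(w,v)` for `0 < p ≤ 1 ≤ q < ∞`, `p ≠ q`:
`‖f‖_{M(Cop₁(u), Ces_{p,q}(w,v))} ≈ sup_{t>0} (∫_t^∞ w^q)^{1/q} ‖f·ω₂‖_{p',(0,t)}`,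
where `ω₂(x) = (∫_0^x u)⁻¹ v(x)`, with constants depending only on `p` and `q`. -/
theorem multiplier_r_eq_one_q_ge_one (p q : ℝ) (hp : 0 < p) (hp1 : p ≤ 1)
    (hq1 : 1 ≤ q) (hpq : p ≠ q) :
    ∃ c C : ℝ≥0∞, 0 < c ∧ c < ∞ ∧ 0 < C ∧ C < ∞ ∧
      ∀ u v w : ℝ → ℝ≥0∞, IsWeightOn v → MemOmegaDual 1 u →
        MemOmega (ENNReal.ofReal q) w →
        ∀ f : ℝ → ℝ≥0∞, Measurable f →
          let ω₂ : ℝ → ℝ≥0∞ := fun x => (∫⁻ t in Ioo (0:ℝ) x, u t)⁻¹ * v x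
          let lhs := multNorm (copsonNorm 1 1 u (fun _ => 1))
            (cesaroNorm (ENNReal.ofReal p) (ENNReal.ofReal q) w v) f
          let rhs := ⨆ t ∈ Ioi (0:ℝ),
            (∫⁻ s in Ioi t, w s ^ q) ^ (1 / q) *
              wNorm (dualExp p) (fun x => f x * ω₂ x) (Ioo 0 t)
          c * rhs ≤ lhs ∧ lhs ≤ C * rhs :=
  multiplier_r_eq_one_q_ge_one_general p q hp hp1 hq1
end
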